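/- For each γ ≥ 2, the function f_γ(x) = Σ_{i=1}^{γ-1} ((-1)^{γ-1-i} i^{γ-2}/(i!(γ-1-i)!)) e^{-x/i} on [0, ∞) satisfies ∫_0^∞ f_γ(x) dx = 1. -/

import Mathlib

open MeasureTheory
open Finset
open scoped fwdDiff Nat

private lemma fwdDiff_pow' (m : ℕ) :
    Δ_[1] (fun x : ℕ => (x:ℤ)^m) = fun x : ℕ => ∑ j ∈ range m, (m.choose j : ℤ) * (x:ℤ)^j := by
  ext x
  have h := add_pow (x:ℤ) 1 m
  simp only [one_pow, mul_one] at h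
  rw [Finset.sum_range_succ] at h
  simp [fwdDiff, h, Nat.cast_add, Nat.cast_one, mul_comm]

private lemma fwdDiff_key (n : ℕ) : ∀ m ≤ n, (Δ_[1])^[n] (fun x : ℕ => (x:ℤ)^m) 0
    = if m = n then (n ! : ℤ) else 0 := by
  induction n with
  | zero => intro m hm; interval_cases m; simp
  | succ n IH =>
    intro m hm
    rw [Function.iterate_succ_apply, fwdDiff_pow']
    have hsplit : (fun x : ℕ => ∑ j ∈ range m, (m.choose j : ℤ) * (x:ℤ)^j)
        = ∑ j ∈ range m, (m.choose j : ℤ) • (fun x : ℕ => (x:ℤ)^j) := by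
      ext x; simp
    rw [hsplit]
    simp only [fwdDiff_iter_finset_sum, fwdDiff_iter_const_smul, Finset.sum_apply, Pi.smul_apply]
    have hterm : ∀ j ∈ range m, (m.choose j : ℤ) • (Δ_[1])^[n] (fun x : ℕ => (x:ℤ)^j) 0
        = if j = n then (m.choose j : ℤ) * n ! else 0 := by
      intro j hj
      have hj' := Finset.mem_range.mp hj
      rw [IH j (by omega : j ≤ n)]
      split <;> simp [smul_eq_mul]
    rw [Finset.sum_congr rfl hterm, Finset.sum_ite_eq' (range m) n (fun j => (m.choose j : ℤ) * n !)]
    by_cases hmn : m = n + 1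
    · subst hmn
      rw [if_pos (Finset.mem_range.mpr (by omega)), if_pos rfl, Nat.choose_succ_self_right]
      push_cast [Nat.factorial_succ]
      ring
    · have : n ∉ range m := by simp; omega
      rw [if_neg this, if_neg hmn]

private lemma int_id (n : ℕ) :
    ∑ k ∈ range (n + 1), (-1 : ℤ) ^ (n - k) * n.choose k * (k:ℤ)^n = n ! := by
  have h := fwdDiff_iter_eq_sum_shift (M := ℕ) (G := ℤ) 1 (fun x : ℕ => (x:ℤ)^n) n 0
  rw [fwdDiff_key n n le_rfl, if_pos rfl] at h
  rw [h]
  refine Finset.sum_congr rfl fun k hk => ?_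
  simp [mul_assoc]

private lemma real_id (n : ℕ) (hn : 1 ≤ n) :
    ∑ i ∈ Icc 1 n, (-1:ℝ)^(n-i) * (i:ℝ)^n / ((i ! : ℝ) * ((n-i)! : ℝ)) = 1 := by
  have h3 : (n ! : ℝ) ≠ 0 := Nat.cast_ne_zero.mpr (Nat.factorial_ne_zero _)
  have hcast : ∀ i ∈ range (n+1), (-1:ℝ)^(n-i) * (i:ℝ)^n / ((i ! : ℝ) * ((n-i)! : ℝ))
      = ((-1:ℝ)^(n-i) * (n.choose i : ℝ) * (i:ℝ)^n) / (n ! : ℝ) := by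
    intro i hi
    have hi' : i ≤ n := by simpa [Nat.lt_succ_iff] using Finset.mem_range.mp hi
    rw [Nat.cast_choose ℝ hi']
    have h1 : (i ! : ℝ) ≠ 0 := Nat.cast_ne_zero.mpr (Nat.factorial_ne_zero _)
    have h2 : ((n-i)! : ℝ) ≠ 0 := Nat.cast_ne_zero.mpr (Nat.factorial_ne_zero _)
    field_simp
  have hR : ∑ i ∈ range (n+1), (-1:ℝ)^(n-i) * (n.choose i:ℝ) * (i:ℝ)^n = (n ! : ℝ) := by
    exact_mod_cast congrArg (fun z : ℤ => (z:ℝ)) (int_id n)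
  have hsub : Icc 1 n ⊆ range (n+1) := by intro i hi; simp at *; omega
  rw [Finset.sum_subset hsub (fun i hi hni => ?_)]
  · rw [Finset.sum_congr rfl hcast, ← Finset.sum_div, hR, div_self h3]
  · have hi0 : i = 0 := by simp at hi hni; omega
    subst hi0
    simp [zero_pow (by omega : n ≠ 0)]

private lemma exp_int {b : ℝ} (hb : 0 < b) :
    ∫ x in Set.Ioi (0:ℝ), Real.exp (-b * x) = 1 / b := by
  have hderiv : ∀ x ∈ Set.Ici (0:ℝ), HasDerivAt (fun x => -Real.exp (-b * x) / b)
      (Real.exp (-b * x)) x := by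
    intro x _
    simpa [hb.ne', mul_comm, mul_div_assoc] using
      (((hasDerivAt_id x).const_mul (-b)).exp.neg.div_const b)
  have hint := exp_neg_integrableOn_Ioi 0 hb
  have htend : Filter.Tendsto (fun x => -Real.exp (-b * x) / b) Filter.atTop (nhds (-0 / b)) := by
    refine Filter.Tendsto.div_const (Filter.Tendsto.neg ?_) _
    exact Real.tendsto_exp_atBot.comp (Filter.tendsto_id.const_mul_atTop_of_neg (by linarith))
  have h := MeasureTheory.integral_Ioi_of_hasDerivAt_of_tendsto' hderiv hint htend
  simp at h
  simp only [neg_mul] at *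
  rw [h]; ring

/-- The density `f_γ(x) = Σ_{i=1}^{γ-1} ((-1)^{γ-1-i} i^{γ-2} / (i! (γ-1-i)!)) e^{-x/i}`. -/
noncomputable def fdens (γ : ℕ) (x : ℝ) : ℝ :=
  ∑ i ∈ Finset.Icc 1 (γ - 1),
    ((-1 : ℝ) ^ (γ - 1 - i) * (i : ℝ) ^ (γ - 2) /
      ((Nat.factorial i : ℝ) * (Nat.factorial (γ - 1 - i) : ℝ))) * Real.exp (-x / i)

/-- For each `γ ≥ 2`, the function `f_γ` integrates to `1` over `[0, ∞)`. -/
theorem stmt4 (γ : ℕ) (hγ : 2 ≤ γ) :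
    ∫ x in Set.Ici (0 : ℝ), fdens γ x = 1 := by
  obtain ⟨n, rfl⟩ : ∃ n, γ = n + 1 := ⟨γ - 1, by omega⟩
  have hn : 1 ≤ n := by omega
  have hpos : ∀ i ∈ Icc 1 n, (0:ℝ) < ((i:ℝ))⁻¹ := by
    intro i hi
    have : 1 ≤ i := (Finset.mem_Icc.mp hi).1
    positivity
  have hexp : ∀ (i : ℕ), i ∈ Icc 1 n → (fun x : ℝ => Real.exp (-x / i))
      = fun x : ℝ => Real.exp (-((i:ℝ))⁻¹ * x) := by
    intro i hi
    ext x
    congr 1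
    ring
  unfold fdens
  simp only [Nat.add_sub_cancel, (by omega : n + 1 - 2 = n - 1)]
  rw [MeasureTheory.integral_Ici_eq_integral_Ioi]
  rw [MeasureTheory.integral_finset_sum _ (fun i hi => ?_)]
  · calc ∑ i ∈ Icc 1 n, ∫ x in Set.Ioi (0:ℝ),
          ((-1:ℝ)^(n-i) * (i:ℝ)^(n-1) / ((i ! : ℝ) * ((n-i)! : ℝ))) * Real.exp (-x / i)
        = ∑ i ∈ Icc 1 n, (-1:ℝ)^(n-i) * (i:ℝ)^n / ((i ! : ℝ) * ((n-i)! : ℝ)) := by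
          refine Finset.sum_congr rfl fun i hi => ?_
          rw [MeasureTheory.integral_const_mul]
          have h1 : 1 ≤ i := (Finset.mem_Icc.mp hi).1
          have : ∫ x in Set.Ioi (0:ℝ), Real.exp (-x / i)
              = ∫ x in Set.Ioi (0:ℝ), Real.exp (-((i:ℝ))⁻¹ * x) := by rw [hexp i hi]
          rw [this, exp_int (hpos i hi)]
          have hi0 : (i:ℝ) ≠ 0 := by positivity
          rw [one_div, inv_inv]
          have hip : (i:ℝ)^(n-1) * (i:ℝ) = (i:ℝ)^n := by
            rw [← pow_succ]
            congr 1
            omega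
          rw [div_mul_eq_mul_div, mul_assoc, hip]
      _ = 1 := real_id n hn
  · -- integrability
    have h1 : 1 ≤ i := (Finset.mem_Icc.mp hi).1
    have := (exp_neg_integrableOn_Ioi 0 (hpos i hi)).const_mul
      ((-1:ℝ)^(n-i) * (i:ℝ)^(n-1) / ((i ! : ℝ) * ((n-i)! : ℝ)))
    refine this.congr (Filter.Eventually.of_forall fun x => ?_)
    have harg : -((i:ℝ))⁻¹ * x = -x / i := by ring
    simp only [harg]
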